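/- For all real numbers γ₁, γ₂ and every i ∈ {0, 2, 4}, the lines ℓ_a = {(γ₁/√3)·x^i + (γ₂/√3)·x^{i+1} + λ·x^i : λ ∈ ℝ} and ℓ_b = {(γ₁/√3)·x^{i+2} + (γ₂/√3)·x^{i+1} + λ·x^i : λ ∈ ℝ} are in the same Δ₀-orbit (i.e., there exists t ∈ Δ₀ with ℓ_b = {z + t : z ∈ ℓ_a}) if and only if √3·γ₁ ∈ G. -/
import Mathlib


/-- `x = exp(πi/6)`, a primitive 12th root of unity. -/
noncomputable def x : ℂ := Complex.exp (Real.pi * Complex.I / 6)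

/-- `G = ℤ[√3]` as a subset of `ℝ`. -/
def G : Set ℝ := {r | ∃ a b : ℤ, r = a + b * Real.sqrt 3}

/-- `Δ₀ = (1/√3)·ℤ[x]`, the additive subgroup of `ℂ` generated by
`(1/√3)·x^k`, `0 ≤ k ≤ 5`. -/
def Delta0 : Set ℂ :=
  {z | ∃ n : Fin 6 → ℤ,
    z = ∑ k : Fin 6, (n k : ℂ) * ((1 / (Real.sqrt 3 : ℂ)) * x ^ (k : ℕ))}

open Complex

lemma hx_val : x = ((Real.sqrt 3 : ℝ) : ℂ) / 2 + Complex.I / 2 := by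
  have h : (Real.pi : ℂ) * Complex.I / 6 = ((Real.pi / 6 : ℝ) : ℂ) * Complex.I := by
    push_cast; ring
  rw [x, h, Complex.exp_mul_I, ← Complex.ofReal_cos, ← Complex.ofReal_sin,
    Real.cos_pi_div_six, Real.sin_pi_div_six]
  push_cast; ring

lemma hr2C : ((Real.sqrt 3 : ℝ) : ℂ) ^ 2 = 3 := by
  norm_cast
  rw [Real.sq_sqrt]; norm_num

lemma hr0 : ((Real.sqrt 3 : ℝ) : ℂ) ≠ 0 := by
  simp [Real.sqrt_eq_zero']

lemma hx2 : x ^ 2 = (1 + ((Real.sqrt 3 : ℝ) : ℂ) * Complex.I) / 2 := by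
  rw [hx_val]; linear_combination (hr2C + Complex.I_sq) / 4

lemma hx3 : x ^ 3 = Complex.I := by
  rw [hx_val]
  linear_combination ((((Real.sqrt 3:ℝ):ℂ) + 3*Complex.I)/8) * hr2C +
    ((3 * ((Real.sqrt 3:ℝ):ℂ) + Complex.I)/8) * Complex.I_sq

lemma hx4 : x ^ 4 = (-1 + ((Real.sqrt 3 : ℝ) : ℂ) * Complex.I) / 2 := by
  have : x ^ 4 = x ^ 3 * x := by ring
  rw [this, hx3, hx_val]; linear_combination Complex.I_sq / 2

lemma hx5 : x ^ 5 = (-((Real.sqrt 3 : ℝ) : ℂ) + Complex.I) / 2 := by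
  have : x ^ 5 = x ^ 3 * x ^ 2 := by ring
  rw [this, hx3, hx2]; linear_combination (((Real.sqrt 3:ℝ):ℂ)/2) * Complex.I_sq

lemma hx6 : x ^ 6 = -1 := by
  have : x ^ 6 = (x ^ 3) ^ 2 := by ring
  rw [this, hx3, Complex.I_sq]

lemma hx12 : x ^ 12 = 1 := by
  have : x ^ 12 = (x ^ 6) ^ 2 := by ring
  rw [this, hx6]; ring

lemma x_ne : x ≠ 0 := Complex.exp_ne_zero _

lemma delta0_mul_x {s : ℂ} (hs : s ∈ Delta0) : x * s ∈ Delta0 := by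
  obtain ⟨n, rfl⟩ := hs
  refine ⟨![-n 5, n 0, n 1, n 2, n 3, n 4], ?_⟩
  simp only [Fin.sum_univ_six,
    show ((0:Fin 6):ℕ) = 0 from rfl, show ((1:Fin 6):ℕ) = 1 from rfl,
    show ((2:Fin 6):ℕ) = 2 from rfl, show ((3:Fin 6):ℕ) = 3 from rfl,
    show ((4:Fin 6):ℕ) = 4 from rfl, show ((5:Fin 6):ℕ) = 5 from rfl,
    show (![-n 5, n 0, n 1, n 2, n 3, n 4]) 0 = -n 5 from rfl,
    show (![-n 5, n 0, n 1, n 2, n 3, n 4]) 1 = n 0 from rfl,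
    show (![-n 5, n 0, n 1, n 2, n 3, n 4]) 2 = n 1 from rfl,
    show (![-n 5, n 0, n 1, n 2, n 3, n 4]) 3 = n 2 from rfl,
    show (![-n 5, n 0, n 1, n 2, n 3, n 4]) 4 = n 3 from rfl,
    show (![-n 5, n 0, n 1, n 2, n 3, n 4]) 5 = n 4 from rfl]
  push_cast
  linear_combination ((n 5 : ℂ) * (1 / (Real.sqrt 3 : ℂ))) * hx6

lemma delta0_mul_xpow (k : ℕ) {s : ℂ} (hs : s ∈ Delta0) : x ^ k * s ∈ Delta0 := by
  induction k with
  | zero => simpa using hs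
  | succ m ih =>
      have := delta0_mul_x ih
      rw [pow_succ]
      convert this using 1
      ring

lemma line_shift (a a' b t d : ℂ) :
    ({z : ℂ | ∃ lam : ℝ, z = a' + b + (lam : ℂ) * d} =
      (fun z => z + t) '' {z : ℂ | ∃ lam : ℝ, z = a + b + (lam : ℂ) * d}) ↔
    ∃ μ : ℝ, a' = a + t + (μ : ℂ) * d := by
  constructor
  · intro h
    have h0 : a' + b + ((0 : ℝ) : ℂ) * d ∈ {z : ℂ | ∃ lam : ℝ, z = a' + b + (lam : ℂ) * d} :=
      ⟨0, rfl⟩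
    rw [h] at h0
    obtain ⟨w, ⟨lam, rfl⟩, hw⟩ := h0
    refine ⟨lam, ?_⟩
    simp only at hw
    push_cast at hw ⊢
    linear_combination -hw
  · rintro ⟨μ, rfl⟩
    ext z
    simp only [Set.mem_setOf_eq, Set.mem_image]
    constructor
    · rintro ⟨lam, rfl⟩
      exact ⟨a + b + ((lam + μ : ℝ) : ℂ) * d, ⟨lam + μ, rfl⟩, by push_cast; ring⟩
    · rintro ⟨w, ⟨lam, rfl⟩, rfl⟩
      exact ⟨lam - μ, by push_cast; ring⟩

lemma sum_explicit (n : Fin 6 → ℤ) :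
    ((Real.sqrt 3 : ℝ) : ℂ) *
      (∑ k : Fin 6, (n k : ℂ) * ((1 / (Real.sqrt 3 : ℂ)) * x ^ (k : ℕ)))
    = (((n 0 : ℝ) + ((n 1 : ℝ) - (n 5 : ℝ)) * Real.sqrt 3 / 2 + ((n 2 : ℝ) - (n 4 : ℝ)) / 2 : ℝ) : ℂ)
      + ((((n 1 : ℝ) + (n 5 : ℝ)) / 2 + ((n 2 : ℝ) + (n 4 : ℝ)) * Real.sqrt 3 / 2 + (n 3 : ℝ) : ℝ) : ℂ) * Complex.I := by
  have hsum : ((Real.sqrt 3 : ℝ) : ℂ) *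
      (∑ k : Fin 6, (n k : ℂ) * ((1 / (Real.sqrt 3 : ℂ)) * x ^ (k : ℕ)))
      = ∑ k : Fin 6, (n k : ℂ) * x ^ (k : ℕ) := by
    rw [Finset.mul_sum]
    refine Finset.sum_congr rfl fun k _ => ?_
    field_simp
  rw [hsum]
  simp only [Fin.sum_univ_six,
    show ((0:Fin 6):ℕ) = 0 from rfl, show ((1:Fin 6):ℕ) = 1 from rfl,
    show ((2:Fin 6):ℕ) = 2 from rfl, show ((3:Fin 6):ℕ) = 3 from rfl,
    show ((4:Fin 6):ℕ) = 4 from rfl, show ((5:Fin 6):ℕ) = 5 from rfl,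
    pow_zero, pow_one]
  rw [hx2, hx3, hx4, hx5, hx_val]
  push_cast
  ring

lemma lhs_explicit (γ₁ : ℝ) :
    (γ₁ : ℂ) * (x ^ 2 - 1)
      = ((-γ₁ / 2 : ℝ) : ℂ) + ((γ₁ * Real.sqrt 3 / 2 : ℝ) : ℂ) * Complex.I := by
  rw [hx2]; push_cast; ring

lemma key (γ₁ : ℝ) :
    (∃ s ∈ Delta0, ∃ μ : ℝ, (γ₁ : ℂ) / (Real.sqrt 3 : ℂ) * (x ^ 2 - 1) = s + (μ : ℂ))
      ↔ Real.sqrt 3 * γ₁ ∈ G := by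
  constructor
  · rintro ⟨s, ⟨n, rfl⟩, μ, heq⟩
    have h2 := congrArg (fun z => ((Real.sqrt 3 : ℝ) : ℂ) * z) heq
    simp only [mul_add] at h2
    rw [sum_explicit] at h2
    have hl : ((Real.sqrt 3 : ℝ) : ℂ) * ((γ₁ : ℂ) / (Real.sqrt 3 : ℂ) * (x ^ 2 - 1))
        = (γ₁ : ℂ) * (x ^ 2 - 1) := by
      field_simp
    rw [hl, lhs_explicit] at h2
    have h3 := congrArg Complex.im h2
    simp only [Complex.add_im, Complex.mul_im, Complex.ofReal_im, Complex.ofReal_re,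
      Complex.I_im, Complex.I_re, mul_zero, mul_one, zero_mul, add_zero, zero_add,
      Complex.mul_re] at h3
    refine ⟨n 1 + 2 * n 3 + n 5, n 2 + n 4, ?_⟩
    push_cast
    linarith
  · rintro ⟨a, b, hab⟩
    refine ⟨∑ k : Fin 6, ((![0, a, b, 0, 0, 0] : Fin 6 → ℤ) k : ℂ) *
        ((1 / (Real.sqrt 3 : ℂ)) * x ^ (k : ℕ)), ⟨![0, a, b, 0, 0, 0], rfl⟩,
      -γ₁ * Real.sqrt 3 / 6 - a / 2 - b * Real.sqrt 3 / 6, ?_⟩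
    apply mul_left_cancel₀ hr0
    have hl : ((Real.sqrt 3 : ℝ) : ℂ) * ((γ₁ : ℂ) / (Real.sqrt 3 : ℂ) * (x ^ 2 - 1))
        = (γ₁ : ℂ) * (x ^ 2 - 1) := by field_simp
    rw [mul_add, sum_explicit, hl, lhs_explicit]
    have habC : ((Real.sqrt 3 : ℝ) : ℂ) * (γ₁ : ℂ) = (a : ℂ) + (b : ℂ) * ((Real.sqrt 3 : ℝ) : ℂ) := by
      exact_mod_cast congrArg (Complex.ofReal) hab
    simp only [show (![0, a, b, 0, 0, 0] : Fin 6 → ℤ) 0 = 0 from rfl,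
      show (![0, a, b, 0, 0, 0] : Fin 6 → ℤ) 1 = a from rfl,
      show (![0, a, b, 0, 0, 0] : Fin 6 → ℤ) 2 = b from rfl,
      show (![0, a, b, 0, 0, 0] : Fin 6 → ℤ) 3 = 0 from rfl,
      show (![0, a, b, 0, 0, 0] : Fin 6 → ℤ) 4 = 0 from rfl,
      show (![0, a, b, 0, 0, 0] : Fin 6 → ℤ) 5 = 0 from rfl]
    push_cast
    linear_combination (((γ₁ : ℂ) + (b : ℂ)) / 6) * hr2C + (Complex.I / 2) * habC

lemma key2 (γ₁ : ℝ) (i i' : ℕ) (h1 : x ^ i * x ^ i' = 1) :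
    (∃ t ∈ Delta0, ∃ μ : ℝ,
        (γ₁ : ℂ) / (Real.sqrt 3 : ℂ) * x ^ (i + 2)
          = (γ₁ : ℂ) / (Real.sqrt 3 : ℂ) * x ^ i + t + (μ : ℂ) * x ^ i)
      ↔ Real.sqrt 3 * γ₁ ∈ G := by
  rw [← key γ₁]
  constructor
  · rintro ⟨t, ht, μ, heq⟩
    refine ⟨x ^ i' * t, delta0_mul_xpow i' ht, μ, ?_⟩
    linear_combination x ^ i' * heq + ((μ : ℂ) - (γ₁ : ℂ) / (Real.sqrt 3 : ℂ) * (x ^ 2 - 1)) * h1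
  · rintro ⟨s, hs, μ, heq⟩
    refine ⟨x ^ i * s, delta0_mul_xpow i hs, μ, ?_⟩
    linear_combination x ^ i * heq

theorem stmt17 (γ₁ γ₂ : ℝ) (i : ℕ) (hi : i ∈ ({0, 2, 4} : Set ℕ)) :
    (∃ t ∈ Delta0,
      {z : ℂ | ∃ lam : ℝ,
          z = ((γ₁ : ℂ) / (Real.sqrt 3 : ℂ)) * x ^ (i + 2) +
              ((γ₂ : ℂ) / (Real.sqrt 3 : ℂ)) * x ^ (i + 1) + (lam : ℂ) * x ^ i} =
        (fun z => z + t) ''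
          {z : ℂ | ∃ lam : ℝ,
            z = ((γ₁ : ℂ) / (Real.sqrt 3 : ℂ)) * x ^ i +
                ((γ₂ : ℂ) / (Real.sqrt 3 : ℂ)) * x ^ (i + 1) + (lam : ℂ) * x ^ i}) ↔
      Real.sqrt 3 * γ₁ ∈ G := by
  have hstep : ∀ i' : ℕ, x ^ i * x ^ i' = 1 →
      ((∃ t ∈ Delta0,
        {z : ℂ | ∃ lam : ℝ,
            z = ((γ₁ : ℂ) / (Real.sqrt 3 : ℂ)) * x ^ (i + 2) +
                ((γ₂ : ℂ) / (Real.sqrt 3 : ℂ)) * x ^ (i + 1) + (lam : ℂ) * x ^ i} =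
          (fun z => z + t) ''
            {z : ℂ | ∃ lam : ℝ,
              z = ((γ₁ : ℂ) / (Real.sqrt 3 : ℂ)) * x ^ i +
                  ((γ₂ : ℂ) / (Real.sqrt 3 : ℂ)) * x ^ (i + 1) + (lam : ℂ) * x ^ i}) ↔
        Real.sqrt 3 * γ₁ ∈ G) := by
    intro i' h1
    rw [← key2 γ₁ i i' h1]
    constructor
    · rintro ⟨t, ht, h⟩
      exact ⟨t, ht, (line_shift _ _ _ t _).1 h⟩
    · rintro ⟨t, ht, h⟩
      exact ⟨t, ht, (line_shift _ _ _ t _).2 h⟩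
  simp only [Set.mem_insert_iff, Set.mem_singleton_iff] at hi
  rcases hi with rfl | rfl | rfl
  · exact hstep 0 (by norm_num)
  · exact hstep 10 (by rw [← pow_add]; norm_num [hx12])
  · exact hstep 8 (by rw [← pow_add]; norm_num [hx12])
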